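/- (Petz map of a unitary dilation) For a channel E[ρ] = Tr_B[U(ρ⊗β)U†] and full-rank reference α with E[α] full rank, the Petz map satisfies \hat{E}_α[ρ] = Tr_B{ U† √(U(α⊗β)U†) [ ((E[α])^{-1/2} ρ (E[α])^{-1/2}) ⊗ 𝟙 ] √(U(α⊗β)U†) U }. -/

import Mathlib

/-!
Unitary conjugation and Kronecker products commute with the positive square root, by its
uniqueness; hence `√(U(α⊗β)U†) = U(√α⊗√β)U†`. The unitaries then cancel, and writing
`√α⊗√β = (√α⊗𝟙)(𝟙⊗√β) = (𝟙⊗√β)(√α⊗𝟙)` the outer factors `√α⊗𝟙` pass through `Tr_B`.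
-/

open Matrix Kronecker ComplexOrder

/-- The partial trace over the second (environment) factor. -/
noncomputable def trB {n m : Type*} [Fintype n] [Fintype m]
    (M : Matrix (n × m) (n × m) ℂ) : Matrix n n ℂ :=
  Matrix.of fun i j => ∑ b, M (i, b) (j, b)

/-- The positive semidefinite square root of a positive semidefinite matrix
(the definition removed from Mathlib, restored verbatim). -/
noncomputable def Matrix.PosSemidef.sqrt {n 𝕜 : Type*} [Fintype n] [DecidableEq n] [RCLike 𝕜]
    {A : Matrix n n 𝕜} (hA : A.PosSemidef) : Matrix n n 𝕜 :=
  (hA.1.eigenvectorUnitary : Matrix n n 𝕜) *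
    diagonal (((↑) : ℝ → 𝕜) ∘ (√·) ∘ hA.1.eigenvalues) *
    (star hA.1.eigenvectorUnitary : Matrix n n 𝕜)

namespace Matrix.PosSemidef

open scoped MatrixOrder

variable {n 𝕜 : Type*} [Fintype n] [DecidableEq n] [RCLike 𝕜] {A : Matrix n n 𝕜}

lemma sqrt_eq_cfcSqrt (hA : A.PosSemidef) : hA.sqrt = CFC.sqrt A := by
  rw [CFC.sqrt_eq_real_sqrt A hA.nonneg, cfcₙ_eq_cfc, hA.1.cfc_eq]
  rfl

lemma posSemidef_sqrt (hA : A.PosSemidef) : hA.sqrt.PosSemidef := by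
  rw [hA.sqrt_eq_cfcSqrt]
  exact (CFC.sqrt_nonneg A).posSemidef

lemma sqrt_mul_self (hA : A.PosSemidef) : hA.sqrt * hA.sqrt = A := by
  rw [hA.sqrt_eq_cfcSqrt]
  exact CFC.sqrt_mul_sqrt_self A hA.nonneg

lemma eq_sqrt_of_mul_self_eq {B : Matrix n n 𝕜} (hB : B.PosSemidef) (hA : A.PosSemidef)
    (h : B * B = A) : B = hA.sqrt := by
  rw [hA.sqrt_eq_cfcSqrt]
  exact (CFC.sqrt_unique h hB.nonneg).symm

lemma sqrt_kronecker {m : Type*} [Fintype m] [DecidableEq m] {B : Matrix m m 𝕜}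
    (hA : A.PosSemidef) (hB : B.PosSemidef) (hAB : (A ⊗ₖ B).PosSemidef) :
    hAB.sqrt = hA.sqrt ⊗ₖ hB.sqrt :=
  (eq_sqrt_of_mul_self_eq (hA.posSemidef_sqrt.kronecker hB.posSemidef_sqrt) hAB
    (by rw [← mul_kronecker_mul, hA.sqrt_mul_self, hB.sqrt_mul_self])).symm

lemma sqrt_unitary_conj {U : Matrix n n 𝕜} (hU : U ∈ unitaryGroup n 𝕜) (hA : A.PosSemidef)
    (hUA : (U * A * Uᴴ).PosSemidef) : hUA.sqrt = U * hA.sqrt * Uᴴ := by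
  have hUU : Uᴴ * U = 1 := mem_unitaryGroup_iff'.mp hU
  refine (eq_sqrt_of_mul_self_eq (hA.posSemidef_sqrt.mul_mul_conjTranspose_same U) hUA ?_).symm
  calc U * hA.sqrt * Uᴴ * (U * hA.sqrt * Uᴴ) = U * hA.sqrt * (Uᴴ * U) * hA.sqrt * Uᴴ := by
        simp only [mul_assoc]
    _ = U * A * Uᴴ := by rw [hUU, mul_one, mul_assoc U, hA.sqrt_mul_self]

end Matrix.PosSemidef

section trB

variable {n m : Type*} [Fintype n] [Fintype m] [DecidableEq m]

lemma trB_kronecker_one_mul (A : Matrix n n ℂ) (N : Matrix (n × m) (n × m) ℂ) :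
    trB ((A ⊗ₖ (1 : Matrix m m ℂ)) * N) = A * trB N := by
  ext i j
  simp only [trB, of_apply, mul_apply, kroneckerMap_apply, one_apply, mul_ite, mul_one, mul_zero,
    ite_mul, zero_mul, Fintype.sum_prod_type, Finset.sum_ite_eq, Finset.mem_univ, ↓reduceIte,
    Finset.mul_sum]
  rw [Finset.sum_comm]

lemma trB_mul_kronecker_one (B : Matrix n n ℂ) (N : Matrix (n × m) (n × m) ℂ) :
    trB (N * (B ⊗ₖ (1 : Matrix m m ℂ))) = trB N * B := by
  ext i j
  simp only [trB, of_apply, mul_apply, kroneckerMap_apply, one_apply, mul_ite, mul_one, mul_zero,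
    Fintype.sum_prod_type, Finset.sum_ite_eq', Finset.mem_univ, ↓reduceIte, Finset.sum_mul]
  rw [Finset.sum_comm]

end trB

theorem petz_of_unitary_dilation_general
    {n m : Type*} [Fintype n] [DecidableEq n] [Fintype m] [DecidableEq m]
    (U : Matrix (n × m) (n × m) ℂ) (hU : U ∈ Matrix.unitaryGroup (n × m) ℂ)
    (α : Matrix n n ℂ) (β : Matrix m m ℂ)
    (hα : α.PosDef) (hβ : β.PosSemidef)
    (hEα : (trB (U * (α ⊗ₖ β) * Uᴴ)).PosDef)
    (hω : (U * (α ⊗ₖ β) * Uᴴ).PosSemidef) :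
    ∀ ρ : Matrix n n ℂ,
      hα.posSemidef.sqrt *
        trB (((1 : Matrix n n ℂ) ⊗ₖ hβ.sqrt) * Uᴴ *
            ((((hEα.posSemidef.sqrt)⁻¹) * ρ * ((hEα.posSemidef.sqrt)⁻¹)) ⊗ₖ (1 : Matrix m m ℂ)) *
            U * ((1 : Matrix n n ℂ) ⊗ₖ hβ.sqrt)) *
        hα.posSemidef.sqrt
      = trB (Uᴴ *
          (hω.sqrt *
            ((((hEα.posSemidef.sqrt)⁻¹) * ρ * ((hEα.posSemidef.sqrt)⁻¹)) ⊗ₖ (1 : Matrix m m ℂ)) *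
            hω.sqrt) * U) := by
  intro ρ
  set a := hα.posSemidef.sqrt
  set b := hβ.sqrt
  set M := ((hEα.posSemidef.sqrt)⁻¹ * ρ * (hEα.posSemidef.sqrt)⁻¹) ⊗ₖ (1 : Matrix m m ℂ)
  have hUU : Uᴴ * U = 1 := mem_unitaryGroup_iff'.mp hU
  have hω_sqrt : hω.sqrt = U * (a ⊗ₖ b) * Uᴴ := by
    rw [PosSemidef.sqrt_unitary_conj hU (hα.posSemidef.kronecker hβ) hω, PosSemidef.sqrt_kronecker]
  have hab : a ⊗ₖ b = (a ⊗ₖ 1) * (1 ⊗ₖ b) := by rw [← mul_kronecker_mul, mul_one, one_mul]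
  have hba : a ⊗ₖ b = (1 ⊗ₖ b) * (a ⊗ₖ 1) := by rw [← mul_kronecker_mul, mul_one, one_mul]
  symm
  calc trB (Uᴴ * (hω.sqrt * M * hω.sqrt) * U)
      = trB ((Uᴴ * U) * (a ⊗ₖ b) * (Uᴴ * M * U) * (a ⊗ₖ b) * (Uᴴ * U)) := by
        simp only [hω_sqrt, mul_assoc]
    _ = trB ((a ⊗ₖ 1) * ((1 ⊗ₖ b) * Uᴴ * M * U * (1 ⊗ₖ b)) * (a ⊗ₖ 1)) := by
        rw [hUU, one_mul, mul_one]
        nth_rewrite 1 [hab]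
        rw [hba]
        simp only [mul_assoc]
    _ = a * trB ((1 ⊗ₖ b) * Uᴴ * M * U * (1 ⊗ₖ b)) * a := by
        rw [trB_mul_kronecker_one, trB_kronecker_one_mul]

/-- Petz map of a unitary dilation: for the channel `E[ρ] = Tr_B[U(ρ⊗β)U†]`
with full-rank reference `α` and full-rank output `E[α]`, the Petz map
`√α E†[(E[α])^{-1/2} ρ (E[α])^{-1/2}] √α` (with
`E†[Y] = Tr_B[(𝟙⊗√β)U†(Y⊗𝟙)U(𝟙⊗√β)]`) equals
`ρ ↦ Tr_B{ U† √(U(α⊗β)U†) [((E[α])^{-1/2} ρ (E[α])^{-1/2}) ⊗ 𝟙] √(U(α⊗β)U†) U }`. -/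
theorem petz_of_unitary_dilation
    {n m : Type*} [Fintype n] [DecidableEq n] [Fintype m] [DecidableEq m]
    (U : Matrix (n × m) (n × m) ℂ) (hU : U ∈ Matrix.unitaryGroup (n × m) ℂ)
    (α : Matrix n n ℂ) (β : Matrix m m ℂ)
    (hα : α.PosDef) (hβ : β.PosSemidef) (hαt : α.trace = 1) (hβt : β.trace = 1)
    (hEα : (trB (U * (α ⊗ₖ β) * Uᴴ)).PosDef)
    (hω : (U * (α ⊗ₖ β) * Uᴴ).PosSemidef) :
    ∀ ρ : Matrix n n ℂ,
      hα.posSemidef.sqrt *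
        trB (((1 : Matrix n n ℂ) ⊗ₖ hβ.sqrt) * Uᴴ *
            ((((hEα.posSemidef.sqrt)⁻¹) * ρ * ((hEα.posSemidef.sqrt)⁻¹)) ⊗ₖ (1 : Matrix m m ℂ)) *
            U * ((1 : Matrix n n ℂ) ⊗ₖ hβ.sqrt)) *
        hα.posSemidef.sqrt
      = trB (Uᴴ *
          (hω.sqrt *
            ((((hEα.posSemidef.sqrt)⁻¹) * ρ * ((hEα.posSemidef.sqrt)⁻¹)) ⊗ₖ (1 : Matrix m m ℂ)) *
            hω.sqrt) * U) :=
  petz_of_unitary_dilation_general U hU α β hα hβ hEα hω
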